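/- Corollary 2 (the family structure is recovered at K = Q_fam). Under Assumptions 1, 2a, 3, 4, 5 and family plurality, when Ward's algorithm has produced exactly K = Q_fam clusters, lim_{n→∞} P( for every cluster k of the Q_fam-cluster partition there exists a family F_q with F̂_k(Q_fam) = F_q, and every family arises from exactly one cluster in this way ) = 1. -/

import Mathlib

open MeasureTheory Filter Matrix Finset ProbabilityTheory

noncomputable section

/-- Convergence in probability, across a sequence of probability spaces `(Ω n, μ n)`,
of random elements `X n : Ω n → E` of a (pseudo)metric space to a constant `c`. -/
def TendstoInProb {Ω : ℕ → Type*} [∀ n, MeasurableSpace (Ω n)]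
    (μ : ∀ n, Measure (Ω n)) {E : Type*} [PseudoMetricSpace E]
    (X : ∀ n, Ω n → E) (c : E) : Prop :=
  ∀ ε : ℝ, 0 < ε → Tendsto (fun n => μ n {ω | ε < dist (X n ω) c}) atTop (nhds 0)

/-- Convergence in distribution (weak convergence of the laws), across a sequence of
probability spaces, of random elements `X n : Ω n → E` to a limiting measure `ν` on `E`. -/
def TendstoInDist {Ω : ℕ → Type*} [∀ n, MeasurableSpace (Ω n)]
    (μ : ∀ n, Measure (Ω n)) {E : Type*} [TopologicalSpace E] [PseudoMetricSpace E]
    [MeasurableSpace E] (X : ∀ n, Ω n → E) (ν : Measure E) : Prop :=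
  ∀ f : BoundedContinuousFunction E ℝ,
    Tendsto (fun n => ∫ ω, f (X n ω) ∂(μ n)) atTop (nhds (∫ x, f x ∂ν))

/-- `ν` is a centered (multivariate) Gaussian measure on `ι → ℝ` with covariance matrix
`C`: every linear functional pushes `ν` forward to a centered real Gaussian with the
corresponding variance. -/
def IsCenteredGaussian {ι : Type*} [Fintype ι] (ν : Measure (ι → ℝ))
    (C : Matrix ι ι ℝ) : Prop :=
  IsProbabilityMeasure ν ∧
    ∀ l : ι → ℝ, ν.map (fun x => ∑ i, l i * x i) =
      gaussianReal 0 (Real.toNNReal (l ⬝ᵥ C *ᵥ l))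

/-- A combination of `P` instruments out of `J`: a `P`-subset `[j]` of `{1,…,J}`. -/
abbrev Combo (J P : ℕ) := {S : Finset (Fin J) // S.card = P}

/-- The increasing enumeration of the instruments in the combination `S`. -/
def comboEmb {J P : ℕ} (S : Combo J P) (i : Fin P) : Fin J :=
  (S.1.orderIsoOfFin S.2 i : Fin J)

lemma combo_compl_card {J P : ℕ} (S : Combo J P) : (S.1ᶜ).card = J - P := by
  simp [Finset.card_compl, S.2]

/-- The increasing enumeration of the instruments **not** in the combination `S`. -/
def comboComplEmb {J P : ℕ} (S : Combo J P) (i : Fin (J - P)) : Fin J :=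
  ((S.1ᶜ).orderIsoOfFin (combo_compl_card S) i : Fin J)

/-- `γ_[j]`: the `P × P` submatrix of rows of `γ` corresponding to the combination `S`. -/
def rowsOf {J P : ℕ} (γ : Matrix (Fin J) (Fin P) ℝ) (S : Combo J P) :
    Matrix (Fin P) (Fin P) ℝ :=
  Matrix.of fun i k => γ (comboEmb S i) k

/-- `γ₂`: the `(J−P) × P` submatrix of rows of `γ` for instruments outside `S`. -/
def rowsOfCompl {J P : ℕ} (γ : Matrix (Fin J) (Fin P) ℝ) (S : Combo J P) :
    Matrix (Fin (J - P)) (Fin P) ℝ :=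
  Matrix.of fun i k => γ (comboComplEmb S i) k

/-- `α_[j]`: the subvector of `α` corresponding to the combination `S`. -/
def subvec {J P : ℕ} (α : Fin J → ℝ) (S : Combo J P) : Fin P → ℝ :=
  fun i => α (comboEmb S i)

/-- `α₂`: the subvector of `α` for instruments outside `S`. -/
def subvecCompl {J P : ℕ} (α : Fin J → ℝ) (S : Combo J P) : Fin (J - P) → ℝ :=
  fun i => α (comboComplEmb S i)

/-- Assumption 1: `E[z_i z_i'] = Q` is finite and of full rank. -/
def Assumption1 {J : ℕ} (Q : Matrix (Fin J) (Fin J) ℝ) : Prop := IsUnit Q.det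

/-- The linear IV model with potentially invalid instruments: for each sample size `n`,
data on a probability space `(Ω n, μ n)` generated by `y = Dβ + Zα + u`, `D = Zγ + E`. -/
structure IVModel (J P : ℕ) (Ω : ℕ → Type*) [∀ n, MeasurableSpace (Ω n)] where
  /-- the probability measure at sample size `n` -/
  μ : ∀ n, Measure (Ω n)
  /-- the `n × J` instrument matrix -/
  Z : ∀ n, Ω n → Matrix (Fin n) (Fin J) ℝ
  /-- the structural error -/
  u : ∀ n, Ω n → Fin n → ℝ
  /-- the first-stage error matrix -/
  Eps : ∀ n, Ω n → Matrix (Fin n) (Fin P) ℝ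
  /-- the causal parameter of interest -/
  β : Fin P → ℝ
  /-- the direct effects of the instruments (instrument `j` is valid iff `α j = 0`) -/
  α : Fin J → ℝ
  /-- the `J × P` first-stage coefficient matrix -/
  γ : Matrix (Fin J) (Fin P) ℝ

namespace IVModel

variable {J P : ℕ} {Ω : ℕ → Type*} [∀ n, MeasurableSpace (Ω n)] (M : IVModel J P Ω)

/-- The endogenous regressors `D = Zγ + E`. -/
def D (n : ℕ) (ω : Ω n) : Matrix (Fin n) (Fin P) ℝ := M.Z n ω * M.γ + M.Eps n ω

/-- The outcome `y = Dβ + Zα + u`. -/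
def y (n : ℕ) (ω : Ω n) : Fin n → ℝ := M.D n ω *ᵥ M.β + M.Z n ω *ᵥ M.α + M.u n ω

/-- The `n × (1 + P)` error matrix with rows `w_i = (u_i, ε_i')'`. -/
def W (n : ℕ) (ω : Ω n) : Matrix (Fin n) (Unit ⊕ Fin P) ℝ :=
  Matrix.of fun i a => Sum.elim (fun _ => M.u n ω i) (fun p => M.Eps n ω i p) a

/-- The first-stage OLS estimator `γ̂ = (Z'Z)⁻¹Z'D`. -/
def γhat (n : ℕ) (ω : Ω n) : Matrix (Fin J) (Fin P) ℝ :=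
  ((M.Z n ω)ᵀ * M.Z n ω)⁻¹ * ((M.Z n ω)ᵀ * M.D n ω)

/-- The reduced-form OLS estimator `Γ̂ = (Z'Z)⁻¹Z'y`. -/
def Γhat (n : ℕ) (ω : Ω n) : Fin J → ℝ :=
  ((M.Z n ω)ᵀ * M.Z n ω)⁻¹ *ᵥ ((M.Z n ω)ᵀ *ᵥ M.y n ω)

/-- The matrix `Ĥ` with blocks `γ̂₁, 0, γ̂₂, I` for the combination `S` (first block row:
instruments in `S`; second block row: the remaining instruments). -/
def Hhat (S : Combo J P) (n : ℕ) (ω : Ω n) :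
    Matrix (Fin P ⊕ Fin (J - P)) (Fin P ⊕ Fin (J - P)) ℝ :=
  Matrix.fromBlocks
    (Matrix.of fun i k => M.γhat n ω (comboEmb S i) k) 0
    (Matrix.of fun i k => M.γhat n ω (comboComplEmb S i) k) 1

/-- The just-identified 2SLS estimator `(β̂_[j]', α̂_[j]')' = Ĥ⁻¹ Γ̂` (with the entries of
`Γ̂` reordered so that the instruments of `S` come first), using `Z_[j]` as instruments
and the remaining instruments as controls. -/
def θhat (S : Combo J P) (n : ℕ) (ω : Ω n) : Fin P ⊕ Fin (J - P) → ℝ :=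
  (M.Hhat S n ω)⁻¹ *ᵥ fun idx => M.Γhat n ω (Sum.elim (comboEmb S) (comboComplEmb S) idx)

/-- The just-identified estimator `β̂_[j]` of `β` for combination `S`. -/
def βhat (S : Combo J P) (n : ℕ) (ω : Ω n) : Fin P → ℝ := fun i => M.θhat S n ω (Sum.inl i)

/-- The estimated coefficients `α̂_[j]` of the control instruments for combination `S`. -/
def αhat (S : Combo J P) (n : ℕ) (ω : Ω n) : Fin (J - P) → ℝ :=
  fun i => M.θhat S n ω (Sum.inr i)

/-- The inconsistency `q = γ_[j]⁻¹ α_[j]` of the just-identified estimator based on `S`;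
the probability limit of `β̂_[j]` is `β + q`. -/
def incons (S : Combo J P) : Fin P → ℝ := (rowsOf M.γ S)⁻¹ *ᵥ subvec M.α S

/-- Assumption 2a: `γ_[j]` has rank `P` (is nonsingular) for every `P`-subset `[j]`. -/
def Assumption2a : Prop := ∀ S : Combo J P, IsUnit (rowsOf M.γ S).det

/-- Assumption 3 (together with the corresponding part of Assumption 4): the errors
`w_i = (u_i, ε_i')'` are centered with finite second-moment matrix `Σ`, in the sense that
`n⁻¹ ∑ᵢ w_i →p 0` and `n⁻¹ W'W →p Σ`. -/
def Assumption3 (Sigw : Matrix (Unit ⊕ Fin P) (Unit ⊕ Fin P) ℝ) : Prop :=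
  (∀ a, TendstoInProb M.μ (fun n ω => (n : ℝ)⁻¹ * ∑ i, M.W n ω i a) 0) ∧
  (∀ a b, TendstoInProb M.μ (fun n ω => (n : ℝ)⁻¹ * ((M.W n ω)ᵀ * M.W n ω) a b) (Sigw a b))

/-- Assumption 4: `n⁻¹Z'Z →p Q`, `n⁻¹Z'u →p 0`, `n⁻¹Z'E →p 0`. -/
def Assumption4 (Q : Matrix (Fin J) (Fin J) ℝ) : Prop :=
  (∀ j k, TendstoInProb M.μ (fun n ω => (n : ℝ)⁻¹ * ((M.Z n ω)ᵀ * M.Z n ω) j k) (Q j k)) ∧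
  (∀ j, TendstoInProb M.μ (fun n ω => (n : ℝ)⁻¹ * ((M.Z n ω)ᵀ *ᵥ M.u n ω) j) 0) ∧
  (∀ j p, TendstoInProb M.μ (fun n ω => (n : ℝ)⁻¹ * ((M.Z n ω)ᵀ * M.Eps n ω) j p) 0)

/-- The CLT statistic `n^{-1/2} ∑ᵢ vec(z_i w_i')` of Assumption 5. -/
def cltStat (n : ℕ) (ω : Ω n) : (Unit ⊕ Fin P) × Fin J → ℝ :=
  fun aj => (Real.sqrt n)⁻¹ * ((M.Z n ω)ᵀ * M.W n ω) aj.2 aj.1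

/-- Assumption 5: `n^{-1/2} ∑ᵢ vec(z_i w_i') →d N(0, Σ ⊗ Q)`. -/
def Assumption5 (Q : Matrix (Fin J) (Fin J) ℝ)
    (Sigw : Matrix (Unit ⊕ Fin P) (Unit ⊕ Fin P) ℝ) : Prop :=
  ∃ ν : Measure ((Unit ⊕ Fin P) × Fin J → ℝ),
    IsCenteredGaussian ν (Matrix.kroneckerMap (· * ·) Sigw Q) ∧
    TendstoInDist M.μ M.cltStat ν

end IVModel

/-- Squared Euclidean distance between two points of `ℝ^P`. -/
def sqDist {P : ℕ} (x y : Fin P → ℝ) : ℝ := ∑ i, (x i - y i) ^ 2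

/-- The arithmetic mean of the points `x j`, `j ∈ A` (the cluster mean `S̄`). -/
def clMean {ι : Type*} {P : ℕ} (x : ι → Fin P → ℝ) (A : Finset ι) : Fin P → ℝ :=
  (A.card : ℝ)⁻¹ • ∑ j ∈ A, x j

/-- Ward's weighted squared Euclidean distance
`(|A||B|/(|A|+|B|))·‖Ā − B̄‖²` between two clusters. -/
def wardDist {ι : Type*} {P : ℕ} (x : ι → Fin P → ℝ) (A B : Finset ι) : ℝ :=
  ((A.card : ℝ) * B.card / ((A.card : ℝ) + B.card)) * sqDist (clMean x A) (clMean x B)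

/-- A partition of the (finite) index type `ι`: nonempty clusters, every index in exactly
one cluster. -/
def IsClustering {ι : Type*} (C : Finset (Finset ι)) : Prop :=
  (∀ A ∈ C, A.Nonempty) ∧ ∀ j : ι, ∃! A, A ∈ C ∧ j ∈ A

/-- One step of Ward's agglomerative algorithm: merge the two clusters minimizing the
weighted squared Euclidean distance. -/
def WardStep {ι : Type*} [DecidableEq ι] {P : ℕ} (x : ι → Fin P → ℝ)
    (C1 C2 : Finset (Finset ι)) : Prop :=
  ∃ A ∈ C1, ∃ B ∈ C1, A ≠ B ∧
    (∀ A' ∈ C1, ∀ B' ∈ C1, A' ≠ B' → wardDist x A B ≤ wardDist x A' B') ∧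
    C2 = insert (A ∪ B) ((C1.erase A).erase B)

/-- A clustering path of Ward's algorithm on the points `x j ∈ ℝ^P`, `j : ι`: `path K` is
the partition with `K` clusters; the path starts from the singleton partition and each
partition is obtained from the previous one by a Ward merging step. -/
def IsWardPath {ι : Type*} [Fintype ι] [DecidableEq ι] {P : ℕ} (x : ι → Fin P → ℝ)
    (path : ℕ → Finset (Finset ι)) : Prop :=
  path (Fintype.card ι) = Finset.univ.image (fun j => ({j} : Finset ι)) ∧
  ∀ K, 1 ≤ K → K < Fintype.card ι → WardStep x (path (K + 1)) (path K)

namespace IVModel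

variable {J P : ℕ} {Ω : ℕ → Type*} [∀ n, MeasurableSpace (Ω n)] (M : IVModel J P Ω)

/-- The (finite) family `F_q` of IV combinations whose just-identified estimators
converge to `β + q`. -/
def family (q : Fin P → ℝ) : Finset (Combo J P) :=
  Finset.univ.filter fun S : Combo J P => M.incons S = q

/-- The set `V` of valid instruments, `{j : α_j = 0}`. -/
def validSet : Finset (Fin J) := Finset.univ.filter fun j => M.α j = 0

/-- Assumption 6a (family plurality): `C(g, P) > max_{q ≠ 0} |F_q|`, where `g` is the
number of valid instruments. -/
def FamilyPlurality : Prop :=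
  ∀ q : Fin P → ℝ, q ≠ 0 → (M.family q).card < Nat.choose M.validSet.card P

end IVModel

/-!
Each just-identified estimator `β̂_[j]` is a continuous function of the sample moments
`n⁻¹Z'Z`, `n⁻¹Z'u`, `n⁻¹Z'E` near their limits `(Q, 0, 0)`, so `β̂_[j] →p β + q_[j]` with
`q_[j] = γ_[j]⁻¹α_[j]`. These limits take one value per family. Once every estimate lies
within a small `ε` of its limit, Ward's criterion is `O(ε²)` for two clusters over the same
limit and bounded below for two clusters over different limits. Starting from the singletons,
as long as there are more clusters than families two of them lie over the same limit, so Ward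
only ever merges within families; after the last such merge the `Q_fam` clusters are exactly
the families.
-/

open Topology

section ConvergenceInProbability

variable {Ω : ℕ → Type*} [∀ n, MeasurableSpace (Ω n)] {μ : ∀ n, Measure (Ω n)}

lemma TendstoInProb.congr_of_ne_zero {E : Type*} [PseudoMetricSpace E] {X Y : ∀ n, Ω n → E}
    {c : E} (h : TendstoInProb μ X c) (hXY : ∀ n, n ≠ 0 → X n = Y n) :
    TendstoInProb μ Y c := by
  intro ε hε
  refine (h ε hε).congr' ?_
  filter_upwards [eventually_ne_atTop 0] with n hn
  rw [hXY n hn]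

lemma TendstoInProb.comp_continuousAt {E F : Type*} [PseudoMetricSpace E] [PseudoMetricSpace F]
    {X : ∀ n, Ω n → E} {c : E} (h : TendstoInProb μ X c) {f : E → F} (hf : ContinuousAt f c) :
    TendstoInProb μ (fun n ω => f (X n ω)) (f c) := by
  intro ε hε
  obtain ⟨δ, hδ, hfδ⟩ := Metric.continuousAt_iff.mp hf ε hε
  have hsub : ∀ n, {ω | ε < dist (f (X n ω)) (f c)} ⊆ {ω | δ / 2 < dist (X n ω) c} := by
    intro n ω hω
    by_contra hle
    exact (hfδ (by simp only [Set.mem_ofPred_eq, not_lt] at hle; linarith)).not_gt hω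
  exact tendsto_of_tendsto_of_tendsto_of_le_of_le tendsto_const_nhds (h (δ / 2) (by linarith))
    (fun _ => zero_le) (fun n => measure_mono (hsub n))

lemma tendstoInProb_pi {ι : Type*} [Fintype ι] {E : ι → Type*} [∀ i, PseudoMetricSpace (E i)]
    {X : ∀ n, Ω n → ∀ i, E i} {c : ∀ i, E i}
    (h : ∀ i, TendstoInProb μ (fun n ω => X n ω i) (c i)) : TendstoInProb μ X c := by
  intro ε hε
  have hsub : ∀ n, {ω | ε < dist (X n ω) c} ⊆ ⋃ i ∈ (univ : Finset ι),
      {ω | ε < dist (X n ω i) (c i)} := by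
    intro n ω hω
    by_contra hnot
    simp only [Set.mem_iUnion, Set.mem_ofPred_eq, mem_univ, exists_const, not_exists,
      not_lt] at hnot
    exact (dist_pi_le_iff hε.le).mpr hnot |>.not_gt hω
  have hsum := tendsto_finsetSum (univ : Finset ι) (fun i _ => h i ε hε)
  rw [Finset.sum_const_zero] at hsum
  exact tendsto_of_tendsto_of_tendsto_of_le_of_le tendsto_const_nhds hsum (fun _ => zero_le)
    (fun n => (measure_mono (hsub n)).trans (measure_biUnion_finset_le _ _))

lemma TendstoInProb.tendsto_measure_dist_le (hμ : ∀ n, IsProbabilityMeasure (μ n))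
    {E : Type*} [PseudoMetricSpace E] {X : ∀ n, Ω n → E} {c : E} (h : TendstoInProb μ X c)
    {ε : ℝ} (hε : 0 < ε) :
    Tendsto (fun n => μ n {ω | dist (X n ω) c ≤ ε}) atTop (𝓝 1) := by
  have hlower : ∀ n, 1 - μ n {ω | ε < dist (X n ω) c} ≤ μ n {ω | dist (X n ω) c ≤ ε} := by
    intro n
    rw [tsub_le_iff_right, ← measure_univ (μ := μ n)]
    convert measure_univ_le_add_compl (μ := μ n) {ω | dist (X n ω) c ≤ ε} using 3
    ext ω
    simp
  have hlim : Tendsto (fun n => 1 - μ n {ω | ε < dist (X n ω) c}) atTop (𝓝 1) := by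
    simpa using ENNReal.Tendsto.sub tendsto_const_nhds (h ε hε) (Or.inl ENNReal.one_ne_top)
  exact tendsto_of_tendsto_of_tendsto_of_le_of_le hlim tendsto_const_nhds hlower
    (fun _ => prob_le_one)

lemma tendsto_measure_one_of_subset (hμ : ∀ n, IsProbabilityMeasure (μ n))
    {s t : ∀ n, Set (Ω n)} (hs : Tendsto (fun n => μ n (s n)) atTop (𝓝 1))
    (hst : ∀ n, s n ⊆ t n) : Tendsto (fun n => μ n (t n)) atTop (𝓝 1) :=
  tendsto_of_tendsto_of_tendsto_of_le_of_le hs tendsto_const_nhds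
    (fun n => measure_mono (hst n)) (fun _ => prob_le_one)

end ConvergenceInProbability

section JustIdentified

variable {J P : ℕ}

def justIdMatrix (G : Matrix (Fin J) (Fin P) ℝ) (S : Combo J P) :
    Matrix (Fin P ⊕ Fin (J - P)) (Fin P ⊕ Fin (J - P)) ℝ :=
  Matrix.fromBlocks (rowsOf G S) 0 (rowsOfCompl G S) 1

def justIdBeta (G : Matrix (Fin J) (Fin P) ℝ) (g : Fin J → ℝ) (S : Combo J P) : Fin P → ℝ :=
  fun i => ((justIdMatrix G S)⁻¹ *ᵥ fun idx => g (Sum.elim (comboEmb S) (comboComplEmb S) idx))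
    (Sum.inl i)

lemma det_justIdMatrix (G : Matrix (Fin J) (Fin P) ℝ) (S : Combo J P) :
    (justIdMatrix G S).det = (rowsOf G S).det := by
  rw [justIdMatrix, Matrix.det_fromBlocks_zero₁₂, Matrix.det_one, mul_one]

/-- With `q = γ_[j]⁻¹α_[j]`, the vector `(β + q, α₂ - γ₂ q)` solves the just-identified
system for the population reduced form `γβ + α`. -/
lemma justIdBeta_reducedForm (γ : Matrix (Fin J) (Fin P) ℝ) (β : Fin P → ℝ) (α : Fin J → ℝ)
    (S : Combo J P) (hS : IsUnit (rowsOf γ S).det) :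
    justIdBeta γ (γ *ᵥ β + α) S = β + (rowsOf γ S)⁻¹ *ᵥ subvec α S := by
  set q := (rowsOf γ S)⁻¹ *ᵥ subvec α S
  have hq : rowsOf γ S *ᵥ q = subvec α S := by
    rw [Matrix.mulVec_mulVec, Matrix.mul_nonsing_inv _ hS, Matrix.one_mulVec]
  have hsolve : (fun idx => (γ *ᵥ β + α) (Sum.elim (comboEmb S) (comboComplEmb S) idx)) =
      justIdMatrix γ S *ᵥ Sum.elim (β + q) (subvecCompl α S - rowsOfCompl γ S *ᵥ q) := by
    rw [justIdMatrix, Matrix.fromBlocks_mulVec, Sum.elim_comp_inl, Sum.elim_comp_inr,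
      Matrix.zero_mulVec, add_zero, Matrix.one_mulVec, Matrix.mulVec_add, Matrix.mulVec_add, hq]
    funext idx
    cases idx with
    | inl i => rfl
    | inr i =>
      simp only [Sum.elim_inr, Pi.add_apply, Pi.sub_apply]
      change (γ *ᵥ β) (comboComplEmb S i) + α (comboComplEmb S i) =
        (γ *ᵥ β) (comboComplEmb S i) + _ + (α (comboComplEmb S i) - _)
      ring
  funext i
  rw [justIdBeta, hsolve, Matrix.mulVec_mulVec, Matrix.nonsing_inv_mul _
    (by rwa [det_justIdMatrix]), Matrix.one_mulVec]
  rfl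

lemma continuousAt_justIdBeta (G : Matrix (Fin J) (Fin P) ℝ) (g : Fin J → ℝ) (S : Combo J P)
    (hS : IsUnit (rowsOf G S).det) :
    ContinuousAt (fun p : Matrix (Fin J) (Fin P) ℝ × (Fin J → ℝ) => justIdBeta p.1 p.2 S)
      (G, g) := by
  have hH : Continuous fun p : Matrix (Fin J) (Fin P) ℝ × (Fin J → ℝ) => justIdMatrix p.1 S :=
    Continuous.matrix_fromBlocks (continuous_fst.matrix_submatrix _ _) continuous_const
      (continuous_fst.matrix_submatrix _ _) continuous_const
  have hdet : ContinuousAt Ring.inverse (justIdMatrix G S).det := by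
    rw [det_justIdMatrix]
    exact NormedRing.inverse_continuousAt hS.unit
  have hinv : ContinuousAt (fun p : Matrix (Fin J) (Fin P) ℝ × (Fin J → ℝ) =>
      (justIdMatrix p.1 S)⁻¹) (G, g) :=
    (continuousAt_matrix_inv _ hdet).comp (f := fun p : Matrix (Fin J) (Fin P) ℝ × (Fin J → ℝ) =>
      justIdMatrix p.1 S) hH.continuousAt
  have hrhs : Continuous fun p : Matrix (Fin J) (Fin P) ℝ × (Fin J → ℝ) =>
      fun idx => p.2 (Sum.elim (comboEmb S) (comboComplEmb S) idx) := by fun_prop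
  exact (continuous_pi fun i => continuous_apply (Sum.inl i)).continuousAt.comp
    ((continuous_fst.matrix_mulVec continuous_snd).continuousAt.comp
      (hinv.prodMk hrhs.continuousAt))

end JustIdentified

lemma Matrix.inv_smul_of_ne_zero {m 𝕜 : Type*} [Fintype m] [DecidableEq m] [Field 𝕜] {k : 𝕜}
    (hk : k ≠ 0) (A : Matrix m m 𝕜) : (k • A)⁻¹ = k⁻¹ • A⁻¹ := by
  by_cases hA : IsUnit A.det
  · exact Matrix.inv_smul' A (Units.mk0 k hk) hA
  · have hkA : ¬IsUnit (k • A).det := by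
      rw [Matrix.det_smul]
      exact fun h => hA (isUnit_of_mul_isUnit_right h)
    rw [Matrix.nonsing_inv_apply_not_isUnit _ hkA, Matrix.nonsing_inv_apply_not_isUnit _ hA,
      smul_zero]

section Moments

variable {J P : ℕ}

/-- The sample moments `n⁻¹Z'Z`, `n⁻¹Z'u`, `n⁻¹Z'E` are stacked into one real vector indexed
by this type, so that Assumption 4 is the convergence in probability of a single vector. -/
abbrev MomentIndex (J P : ℕ) := (Fin J × Fin J) ⊕ Fin J ⊕ (Fin J × Fin P)

def momentZZ (v : MomentIndex J P → ℝ) : Matrix (Fin J) (Fin J) ℝ :=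
  Matrix.of fun j k => v (Sum.inl (j, k))

def momentZu (v : MomentIndex J P → ℝ) : Fin J → ℝ := fun j => v (Sum.inr (Sum.inl j))

def momentZE (v : MomentIndex J P → ℝ) : Matrix (Fin J) (Fin P) ℝ :=
  Matrix.of fun j p => v (Sum.inr (Sum.inr (j, p)))

def populationMoments (Q : Matrix (Fin J) (Fin J) ℝ) : MomentIndex J P → ℝ :=
  Sum.elim (fun jk => Q jk.1 jk.2) 0

namespace IVModel

variable {Ω : ℕ → Type*} [∀ n, MeasurableSpace (Ω n)] (M : IVModel J P Ω)

lemma βhat_eq_justIdBeta (S : Combo J P) (n : ℕ) (ω : Ω n) :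
    M.βhat S n ω = justIdBeta (M.γhat n ω) (M.Γhat n ω) S :=
  rfl

def sampleMoments (n : ℕ) (ω : Ω n) : MomentIndex J P → ℝ :=
  Sum.elim (fun jk => (n : ℝ)⁻¹ * ((M.Z n ω)ᵀ * M.Z n ω) jk.1 jk.2)
    (Sum.elim (fun j => (n : ℝ)⁻¹ * ((M.Z n ω)ᵀ *ᵥ M.u n ω) j)
      (fun jp => (n : ℝ)⁻¹ * ((M.Z n ω)ᵀ * M.Eps n ω) jp.1 jp.2))

/-- The first-stage and reduced-form OLS estimators `(γ̂, Γ̂)` as functions of the sample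
moments: `n⁻¹Z'D = (n⁻¹Z'Z)γ + n⁻¹Z'E` and `n⁻¹Z'y = (n⁻¹Z'D)β + (n⁻¹Z'Z)α + n⁻¹Z'u`. -/
def olsOfMoments (v : MomentIndex J P → ℝ) : Matrix (Fin J) (Fin P) ℝ × (Fin J → ℝ) :=
  ((momentZZ v)⁻¹ * (momentZZ v * M.γ + momentZE v),
    (momentZZ v)⁻¹ *ᵥ ((momentZZ v * M.γ + momentZE v) *ᵥ M.β + momentZZ v *ᵥ M.α + momentZu v))

lemma olsOfMoments_sampleMoments {n : ℕ} (hn : n ≠ 0) (ω : Ω n) :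
    M.olsOfMoments (M.sampleMoments n ω) = (M.γhat n ω, M.Γhat n ω) := by
  have hn' : (n : ℝ)⁻¹ ≠ 0 := inv_ne_zero (Nat.cast_ne_zero.mpr hn)
  have hZZ : momentZZ (M.sampleMoments n ω) = (n : ℝ)⁻¹ • ((M.Z n ω)ᵀ * M.Z n ω) := by
    ext j k; rfl
  have hZu : momentZu (M.sampleMoments n ω) = (n : ℝ)⁻¹ • ((M.Z n ω)ᵀ *ᵥ M.u n ω) := by
    ext j; rfl
  have hZE : momentZE (M.sampleMoments n ω) = (n : ℝ)⁻¹ • ((M.Z n ω)ᵀ * M.Eps n ω) := by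
    ext j p; rfl
  have hZD : momentZZ (M.sampleMoments n ω) * M.γ + momentZE (M.sampleMoments n ω) =
      (n : ℝ)⁻¹ • ((M.Z n ω)ᵀ * M.D n ω) := by
    rw [hZZ, hZE, D, Matrix.mul_add, ← Matrix.mul_assoc, smul_add, Matrix.smul_mul]
  have hZy : (M.Z n ω)ᵀ *ᵥ M.y n ω = ((M.Z n ω)ᵀ * M.D n ω) *ᵥ M.β +
      ((M.Z n ω)ᵀ * M.Z n ω) *ᵥ M.α + (M.Z n ω)ᵀ *ᵥ M.u n ω := by
    rw [y, Matrix.mulVec_add, Matrix.mulVec_add, Matrix.mulVec_mulVec, Matrix.mulVec_mulVec]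
  rw [olsOfMoments, hZD, hZZ, hZu, Matrix.inv_smul_of_ne_zero hn', γhat, Γhat, hZy]
  refine Prod.ext ?_ ?_
  · rw [Matrix.smul_mul, Matrix.mul_smul, smul_smul, inv_mul_cancel₀ hn', one_smul]
  · simp only [Matrix.smul_mulVec, Matrix.mulVec_smul, ← smul_add, smul_smul,
      mul_inv_cancel₀ hn', one_smul]

variable {M}

lemma olsOfMoments_populationMoments {Q : Matrix (Fin J) (Fin J) ℝ} (hQ : IsUnit Q.det) :
    M.olsOfMoments (populationMoments Q) = (M.γ, M.γ *ᵥ M.β + M.α) := by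
  have hZZ : momentZZ (populationMoments (P := P) Q) = Q := by ext j k; rfl
  have hZu : momentZu (populationMoments (P := P) Q) = 0 := by ext j; rfl
  have hZE : momentZE (populationMoments (P := P) Q) = 0 := by ext j p; rfl
  rw [olsOfMoments, hZZ, hZu, hZE, add_zero, add_zero, ← Matrix.mul_assoc,
    Matrix.nonsing_inv_mul _ hQ, Matrix.one_mul, ← Matrix.mulVec_mulVec, ← Matrix.mulVec_add,
    Matrix.mulVec_mulVec, Matrix.nonsing_inv_mul _ hQ, Matrix.one_mulVec]

lemma continuousAt_olsOfMoments {Q : Matrix (Fin J) (Fin J) ℝ} (hQ : IsUnit Q.det) :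
    ContinuousAt M.olsOfMoments (populationMoments Q) := by
  have hZZ : Continuous (momentZZ : (MomentIndex J P → ℝ) → _) :=
    continuous_matrix fun _ _ => continuous_apply _
  have hZu : Continuous (momentZu : (MomentIndex J P → ℝ) → _) :=
    continuous_pi fun _ => continuous_apply _
  have hZE : Continuous (momentZE : (MomentIndex J P → ℝ) → _) :=
    continuous_matrix fun _ _ => continuous_apply _
  have hdet : ContinuousAt Ring.inverse (momentZZ (populationMoments (P := P) Q)).det :=
    NormedRing.inverse_continuousAt hQ.unit
  have hinv : ContinuousAt (fun v : MomentIndex J P → ℝ => (momentZZ v)⁻¹)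
      (populationMoments Q) :=
    (continuousAt_matrix_inv _ hdet).comp (f := momentZZ) hZZ.continuousAt
  have hZD : Continuous fun v : MomentIndex J P → ℝ => momentZZ v * M.γ + momentZE v :=
    (hZZ.matrix_mul continuous_const).add hZE
  refine ContinuousAt.prodMk ?_ ?_
  · exact (continuous_fst.matrix_mul continuous_snd).continuousAt.comp
      (hinv.prodMk hZD.continuousAt)
  · exact (continuous_fst.matrix_mulVec continuous_snd).continuousAt.comp
      (hinv.prodMk (((hZD.matrix_mulVec continuous_const).add
        (hZZ.matrix_mulVec continuous_const)).add hZu).continuousAt)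

lemma sampleMoments_tendstoInProb {Q : Matrix (Fin J) (Fin J) ℝ} (h4 : M.Assumption4 Q) :
    TendstoInProb M.μ M.sampleMoments (populationMoments Q) := by
  apply tendstoInProb_pi
  rintro (⟨j, k⟩ | j | ⟨j, p⟩)
  · exact h4.1 j k
  · exact h4.2.1 j
  · exact h4.2.2 j p

lemma βhat_tendstoInProb {Q : Matrix (Fin J) (Fin J) ℝ} (h1 : Assumption1 Q)
    (h2a : M.Assumption2a) (h4 : M.Assumption4 Q) (S : Combo J P) :
    TendstoInProb M.μ (fun n ω => M.βhat S n ω) (M.β + M.incons S) := by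
  have hcont := (continuousAt_justIdBeta M.γ (M.γ *ᵥ M.β + M.α) S (h2a S)).comp_of_eq
    (continuousAt_olsOfMoments h1) (olsOfMoments_populationMoments h1)
  have hlim := (sampleMoments_tendstoInProb h4).comp_continuousAt hcont
  simp only [Function.comp_apply, olsOfMoments_populationMoments h1,
    justIdBeta_reducedForm _ _ _ S (h2a S)] at hlim
  refine hlim.congr_of_ne_zero fun n hn => funext fun ω => ?_
  rw [olsOfMoments_sampleMoments M hn, βhat_eq_justIdBeta]

end IVModel

end Moments

section Clustering

variable {ι α : Type*}

def IsHomogeneous (t : ι → α) (A : Finset ι) : Prop := ∀ i ∈ A, ∀ j ∈ A, t i = t j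

lemma IsHomogeneous.mono {t : ι → α} {A B : Finset ι} (hB : IsHomogeneous t B) (hAB : A ⊆ B) :
    IsHomogeneous t A :=
  fun i hi j hj => hB i (hAB hi) j (hAB hj)

lemma IsHomogeneous.union [DecidableEq ι] {t : ι → α} {A B : Finset ι} (hA : IsHomogeneous t A)
    (hB : IsHomogeneous t B) {a b : ι} (ha : a ∈ A) (hb : b ∈ B) (hab : t a = t b) :
    IsHomogeneous t (A ∪ B) := by
  have hval : ∀ i ∈ A ∪ B, t i = t a := by
    intro i hi
    rcases mem_union.mp hi with hiA | hiB
    · exact hA i hiA a ha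
    · exact (hB i hiB b hb).trans hab.symm
  exact fun i hi j hj => (hval i hi).trans (hval j hj).symm

lemma IsHomogeneous.image_eq_singleton [DecidableEq α] {t : ι → α} {A : Finset ι}
    (hA : IsHomogeneous t A) {j : ι} (hj : j ∈ A) : A.image t = {t j} := by
  ext q
  simp only [mem_image, mem_singleton]
  constructor
  · rintro ⟨i, hi, rfl⟩
    exact hA i hi j hj
  · rintro rfl
    exact ⟨j, hj, rfl⟩

lemma IsClustering.eq_of_mem {C : Finset (Finset ι)} (hC : IsClustering C) {A B : Finset ι}
    (hA : A ∈ C) (hB : B ∈ C) {j : ι} (hjA : j ∈ A) (hjB : j ∈ B) : A = B :=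
  (hC.2 j).unique ⟨hA, hjA⟩ ⟨hB, hjB⟩

variable [DecidableEq ι]

lemma isClustering_singletons [Fintype ι] :
    IsClustering (univ.image fun j : ι => ({j} : Finset ι)) := by
  refine ⟨?_, fun j => ⟨{j}, ⟨mem_image_of_mem _ (mem_univ j), mem_singleton_self j⟩, ?_⟩⟩
  · simp
  · rintro B ⟨hB, hjB⟩
    obtain ⟨k, -, rfl⟩ := mem_image.mp hB
    rw [mem_singleton.mp hjB]

lemma IsClustering.merge {C : Finset (Finset ι)} (hC : IsClustering C) {A B : Finset ι}
    (hA : A ∈ C) (hB : B ∈ C) : IsClustering (insert (A ∪ B) ((C.erase A).erase B)) := by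
  refine ⟨fun D hD => ?_, fun j => ?_⟩
  · rcases mem_insert.mp hD with rfl | hD
    · exact (hC.1 A hA).mono subset_union_left
    · exact hC.1 D (mem_of_mem_erase (mem_of_mem_erase hD))
  by_cases hj : j ∈ A ∪ B
  · refine ⟨A ∪ B, ⟨mem_insert_self _ _, hj⟩, ?_⟩
    rintro D ⟨hD, hjD⟩
    rcases mem_insert.mp hD with rfl | hD
    · rfl
    obtain ⟨hDB, hD⟩ := mem_erase.mp hD
    obtain ⟨hDA, hD⟩ := mem_erase.mp hD
    rcases mem_union.mp hj with hjA | hjB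
    · exact absurd (hC.eq_of_mem hD hA hjD hjA) hDA
    · exact absurd (hC.eq_of_mem hD hB hjD hjB) hDB
  · obtain ⟨D, ⟨hD, hjD⟩, -⟩ := hC.2 j
    have hDA : D ≠ A := by rintro rfl; exact hj (mem_union_left _ hjD)
    have hDB : D ≠ B := by rintro rfl; exact hj (mem_union_right _ hjD)
    refine ⟨D, ⟨mem_insert_of_mem (mem_erase.mpr ⟨hDB, mem_erase.mpr ⟨hDA, hD⟩⟩), hjD⟩, ?_⟩
    rintro D' ⟨hD', hjD'⟩
    rcases mem_insert.mp hD' with rfl | hD'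
    · exact absurd hjD' hj
    · exact hC.eq_of_mem (mem_of_mem_erase (mem_of_mem_erase hD')) hD hjD' hjD

lemma IsClustering.card_merge {C : Finset (Finset ι)} (hC : IsClustering C) {A B : Finset ι}
    (hA : A ∈ C) (hB : B ∈ C) (hAB : A ≠ B) :
    (insert (A ∪ B) ((C.erase A).erase B)).card = C.card - 1 := by
  have hBA : B ∈ C.erase A := mem_erase.mpr ⟨hAB.symm, hB⟩
  have hnew : A ∪ B ∉ (C.erase A).erase B := by
    intro h
    obtain ⟨a, ha⟩ := hC.1 A hA
    exact ne_of_mem_erase (mem_of_mem_erase h)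
      (hC.eq_of_mem (mem_of_mem_erase (mem_of_mem_erase h)) hA (mem_union_left _ ha) ha)
  have htwo : 1 < C.card := one_lt_card.mpr ⟨A, hA, B, hB, hAB⟩
  rw [card_insert_of_notMem hnew, card_erase_of_mem hBA, card_erase_of_mem hA]
  omega

def IsHomogeneousClustering (t : ι → α) (C : Finset (Finset ι)) : Prop :=
  IsClustering C ∧ ∀ D ∈ C, IsHomogeneous t D

variable [Fintype ι] [DecidableEq α]

lemma IsHomogeneousClustering.exists_ne_isHomogeneous_union {t : ι → α}
    {C : Finset (Finset ι)} (hC : IsHomogeneousClustering t C)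
    (hcard : (univ.image t).card < C.card) :
    ∃ A ∈ C, ∃ B ∈ C, A ≠ B ∧ IsHomogeneous t (A ∪ B) := by
  obtain ⟨hC, hhom⟩ := hC
  have hmaps : Set.MapsTo (fun D : Finset ι => D.image t) C
      ((univ.image t).image fun q => ({q} : Finset α)) := by
    intro D hD
    obtain ⟨j, hj⟩ := hC.1 D hD
    simp only [coe_image, coe_univ, Set.image_univ, Set.mem_image, Set.mem_range]
    exact ⟨t j, ⟨j, rfl⟩, ((hhom D hD).image_eq_singleton hj).symm⟩
  obtain ⟨A, hA, B, hB, hAB, himg⟩ :=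
    exists_ne_map_eq_of_card_lt_of_maps_to (card_image_le.trans_lt hcard) hmaps
  obtain ⟨a, ha⟩ := hC.1 A hA
  obtain ⟨b, hb, hba⟩ := mem_image.mp (himg ▸ mem_image_of_mem t ha : t a ∈ B.image t)
  exact ⟨A, hA, B, hB, hAB, (hhom A hA).union (hhom B hB) ha hb hba.symm⟩

lemma IsHomogeneousClustering.eq_image_fibers {t : ι → α} {C : Finset (Finset ι)}
    (hC : IsHomogeneousClustering t C) (hcard : C.card = (univ.image t).card) :
    C = (univ.image t).image fun q => univ.filter fun i => t i = q := by
  obtain ⟨hC, hhom⟩ := hC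
  -- `D ↦ D.image t` maps `C` onto the singletons `{q}`, a set of the same size as `C`.
  have hinj : ∀ D ∈ C, ∀ D' ∈ C, D.image t = D'.image t → D = D' := by
    refine fun D hD D' hD' => inj_on_of_surj_on_of_card_le (fun D _ => D.image t)
      (t := (univ.image t).image fun q => {q}) ?_ ?_ ?_ hD hD'
    · intro D hD
      obtain ⟨j, hj⟩ := hC.1 D hD
      rw [(hhom D hD).image_eq_singleton hj]
      exact mem_image_of_mem _ (mem_image_of_mem t (mem_univ j))
    · intro s hs
      obtain ⟨q, hq, rfl⟩ := mem_image.mp hs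
      obtain ⟨j, -, rfl⟩ := mem_image.mp hq
      obtain ⟨D, ⟨hD, hjD⟩, -⟩ := hC.2 j
      exact ⟨D, hD, (hhom D hD).image_eq_singleton hjD⟩
    · rw [hcard, card_image_of_injective _ singleton_injective]
  have hfiber : ∀ D ∈ C, ∀ j ∈ D, D = univ.filter fun i => t i = t j := by
    intro D hD j hj
    ext i
    simp only [mem_filter, mem_univ, true_and]
    refine ⟨fun hi => hhom D hD i hi j hj, fun hij => ?_⟩
    obtain ⟨D', ⟨hD', hiD'⟩, -⟩ := hC.2 i
    rwa [← hinj D' hD' D hD (by rw [(hhom D' hD').image_eq_singleton hiD',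
      (hhom D hD).image_eq_singleton hj, hij])]
  ext F
  simp only [mem_image, mem_univ, true_and, exists_exists_eq_and]
  constructor
  · intro hF
    obtain ⟨j, hj⟩ := hC.1 F hF
    exact ⟨j, (hfiber F hF j hj).symm⟩
  · rintro ⟨j, rfl⟩
    obtain ⟨D, ⟨hD, hjD⟩, -⟩ := hC.2 j
    rwa [← hfiber D hD j hjD]

end Clustering

section Ward

variable {ι α : Type*} [DecidableEq ι] {P : ℕ}

def WardSeparates (x : ι → Fin P → ℝ) (t : ι → α) : Prop :=
  ∀ A B A' B' : Finset ι, A.Nonempty → B.Nonempty → A'.Nonempty → B'.Nonempty →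
    IsHomogeneous t (A ∪ B) → IsHomogeneous t A' → IsHomogeneous t B' →
    ¬IsHomogeneous t (A' ∪ B') → wardDist x A B < wardDist x A' B'

variable [Fintype ι] [DecidableEq α] {x : ι → Fin P → ℝ} {t : ι → α}

lemma WardStep.isHomogeneousClustering (hsep : WardSeparates x t)
    {C₁ C₂ : Finset (Finset ι)} (hC₁ : IsHomogeneousClustering t C₁)
    (hcard : (univ.image t).card < C₁.card) (hstep : WardStep x C₁ C₂) :
    IsHomogeneousClustering t C₂ ∧ C₂.card = C₁.card - 1 := by
  obtain ⟨A, hA, B, hB, hAB, hmin, rfl⟩ := hstep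
  obtain ⟨A', hA', B', hB', hA'B', hhom'⟩ := hC₁.exists_ne_isHomogeneous_union hcard
  obtain ⟨hC, hhom⟩ := hC₁
  have hABhom : IsHomogeneous t (A ∪ B) := by
    by_contra hnot
    exact (hmin A' hA' B' hB' hA'B').not_gt (hsep A' B' A B (hC.1 A' hA') (hC.1 B' hB')
      (hC.1 A hA) (hC.1 B hB) hhom' (hhom A hA) (hhom B hB) hnot)
  refine ⟨⟨hC.merge hA hB, fun D hD => ?_⟩, hC.card_merge hA hB hAB⟩
  rcases mem_insert.mp hD with rfl | hD
  · exact hABhom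
  · exact hhom D (mem_of_mem_erase (mem_of_mem_erase hD))

lemma IsWardPath.isHomogeneousClustering {path : ℕ → Finset (Finset ι)}
    (hpath : IsWardPath x path) (hsep : WardSeparates x t) {K : ℕ}
    (hK : (univ.image t).card ≤ K) (hKN : K ≤ Fintype.card ι) :
    IsHomogeneousClustering t (path K) ∧ (path K).card = K := by
  induction hKN using Nat.decreasingInduction with
  | self =>
    rw [hpath.1, card_image_of_injective _ singleton_injective, card_univ]
    refine ⟨⟨isClustering_singletons, fun D hD => ?_⟩, rfl⟩
    obtain ⟨j, -, rfl⟩ := mem_image.mp hD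
    simp [IsHomogeneous]
  | of_succ K hKN ih =>
    obtain ⟨hC, hcard⟩ := ih (by omega)
    have hK1 : 1 ≤ K := by
      have : Nonempty ι := Fintype.card_pos_iff.mp (by omega)
      exact (univ_nonempty.image t).card_pos.trans_le hK
    obtain ⟨hC', hcard'⟩ := (hpath.2 K hK1 hKN).isHomogeneousClustering hsep hC (by omega)
    exact ⟨hC', by omega⟩

theorem IsWardPath.eq_image_fibers {path : ℕ → Finset (Finset ι)} (hpath : IsWardPath x path)
    (hsep : WardSeparates x t) :
    path (univ.image t).card = (univ.image t).image fun q => univ.filter fun i => t i = q := by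
  obtain ⟨hC, hcard⟩ :=
    hpath.isHomogeneousClustering hsep le_rfl (card_image_le.trans_eq card_univ)
  exact hC.eq_image_fibers hcard

end Ward

section WardMetric

variable {ι : Type*} {P : ℕ}

lemma dist_clMean_le {x : ι → Fin P → ℝ} {A : Finset ι} (hA : A.Nonempty) {c : Fin P → ℝ}
    {ε : ℝ} (h : ∀ i ∈ A, dist (x i) c ≤ ε) : dist (clMean x A) c ≤ ε := by
  have hmean : clMean x A = A.centerMass (fun _ => (1 : ℝ)) x := by
    simp [clMean, Finset.centerMass]
  rw [hmean, ← Metric.mem_closedBall]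
  exact (convex_closedBall c ε).centerMass_mem (fun _ _ => zero_le_one)
    (by simpa using hA.card_pos) fun i hi => Metric.mem_closedBall.mpr (h i hi)

lemma sqDist_le (x y : Fin P → ℝ) : sqDist x y ≤ P * dist x y ^ 2 := by
  calc sqDist x y ≤ ∑ _k : Fin P, dist x y ^ 2 := by
        refine sum_le_sum fun k _ => ?_
        rw [← sq_abs, ← Real.dist_eq]
        exact pow_le_pow_left₀ dist_nonneg (dist_le_pi_dist x y k) 2
    _ = P * dist x y ^ 2 := by simp

lemma sq_dist_le_sqDist (x y : Fin P → ℝ) : dist x y ^ 2 ≤ sqDist x y := by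
  have hnonneg : 0 ≤ sqDist x y := sum_nonneg fun _ _ => sq_nonneg _
  have hdist : dist x y ≤ √(sqDist x y) := by
    refine (dist_pi_le_iff (Real.sqrt_nonneg _)).mpr fun k => ?_
    rw [Real.dist_eq]
    exact Real.abs_le_sqrt (single_le_sum (f := fun k => (x k - y k) ^ 2)
      (fun _ _ => sq_nonneg _) (mem_univ k))
  calc dist x y ^ 2 ≤ √(sqDist x y) ^ 2 := pow_le_pow_left₀ dist_nonneg hdist 2
    _ = sqDist x y := Real.sq_sqrt hnonneg

lemma wardDist_le [Fintype ι] (x : ι → Fin P → ℝ) (A : Finset ι) {B : Finset ι}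
    (hB : B.Nonempty) :
    wardDist x A B ≤ Fintype.card ι * (P * dist (clMean x A) (clMean x B) ^ 2) := by
  have hb : (0 : ℝ) < B.card := by exact_mod_cast hB.card_pos
  have hweight : (A.card : ℝ) * B.card / (A.card + B.card) ≤ Fintype.card ι := by
    rw [div_le_iff₀ (by positivity)]
    have hA : (A.card : ℝ) ≤ Fintype.card ι := by exact_mod_cast card_le_univ A
    nlinarith
  exact mul_le_mul hweight (sqDist_le _ _) (sum_nonneg fun _ _ => sq_nonneg _) (by positivity)

lemma half_sq_dist_le_wardDist (x : ι → Fin P → ℝ) {A B : Finset ι} (hA : A.Nonempty)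
    (hB : B.Nonempty) : dist (clMean x A) (clMean x B) ^ 2 / 2 ≤ wardDist x A B := by
  have ha : (1 : ℝ) ≤ A.card := by exact_mod_cast hA.card_pos
  have hb : (1 : ℝ) ≤ B.card := by exact_mod_cast hB.card_pos
  have hweight : 1 / 2 ≤ (A.card : ℝ) * B.card / (A.card + B.card) := by
    rw [div_le_div_iff₀ (by norm_num) (by positivity)]
    nlinarith
  calc dist (clMean x A) (clMean x B) ^ 2 / 2
      = 1 / 2 * dist (clMean x A) (clMean x B) ^ 2 := by ring
    _ ≤ wardDist x A B :=
      mul_le_mul hweight (sq_dist_le_sqDist _ _) (sq_nonneg _) (by positivity)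

variable [DecidableEq ι] [Fintype ι]

/-- Means of two clusters over one limit are within `2ε` of each other, means of clusters over
two limits at least `Δ - 2ε` apart; `hsmall` absorbs the cluster-size weights. -/
theorem wardSeparates_of_dist_le {x t : ι → Fin P → ℝ} {ε Δ : ℝ}
    (hΔ : ∀ i j, t i ≠ t j → Δ ≤ dist (t i) (t j)) (hεΔ : 2 * ε < Δ)
    (hsmall : Fintype.card ι * (P * (2 * ε) ^ 2) < (Δ - 2 * ε) ^ 2 / 2)
    (hx : ∀ i, dist (x i) (t i) ≤ ε) : WardSeparates x t := by
  have hmean : ∀ {D : Finset ι} {j : ι}, j ∈ D → IsHomogeneous t D →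
      dist (clMean x D) (t j) ≤ ε := fun {D j} hj hD =>
    dist_clMean_le ⟨j, hj⟩ fun i hi => hD i hi j hj ▸ hx i
  intro A B A' B' hA hB hA' hB' hAB hA'hom hB'hom hA'B'
  obtain ⟨a, ha⟩ := hA
  obtain ⟨a', ha'⟩ := hA'
  obtain ⟨b', hb'⟩ := hB'
  have hclose : dist (clMean x A) (clMean x B) ≤ 2 * ε := by
    obtain ⟨b, hb⟩ := hB
    have hA_near := hmean ha (hAB.mono subset_union_left)
    have hB_near : dist (clMean x B) (t a) ≤ ε := by
      rw [hAB a (mem_union_left B ha) b (mem_union_right A hb)]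
      exact hmean hb (hAB.mono subset_union_right)
    linarith [dist_triangle_right (clMean x A) (clMean x B) (t a)]
  have hfar : Δ - 2 * ε ≤ dist (clMean x A') (clMean x B') := by
    have hne : t a' ≠ t b' := fun h => hA'B' (hA'hom.union hB'hom ha' hb' h)
    have htri := dist_triangle4 (t a') (clMean x A') (clMean x B') (t b')
    rw [dist_comm (t a') (clMean x A')] at htri
    linarith [hΔ a' b' hne, hmean ha' hA'hom, hmean hb' hB'hom]
  calc wardDist x A B ≤ Fintype.card ι * (P * dist (clMean x A) (clMean x B) ^ 2) :=
        wardDist_le x A hB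
    _ ≤ Fintype.card ι * (P * (2 * ε) ^ 2) := by gcongr
    _ < (Δ - 2 * ε) ^ 2 / 2 := hsmall
    _ ≤ dist (clMean x A') (clMean x B') ^ 2 / 2 := by gcongr
    _ ≤ wardDist x A' B' := half_sq_dist_le_wardDist x ⟨a', ha'⟩ ⟨b', hb'⟩

end WardMetric

lemma exists_pos_forall_ne_le_dist {ι X : Type*} [Finite ι] [MetricSpace X] (t : ι → X) :
    ∃ Δ > 0, ∀ i j, t i ≠ t j → Δ ≤ dist (t i) (t j) := by
  have hev : ∀ᶠ Δ in 𝓝[>] (0 : ℝ), Δ ∈ Set.Ioi 0 ∧ ∀ i j, t i ≠ t j → Δ ≤ dist (t i) (t j) := by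
    refine eventually_mem_nhdsWithin.and
      (eventually_all.2 fun i => eventually_all.2 fun j => ?_)
    by_cases hij : t i = t j
    · exact Eventually.of_forall fun _ hne => absurd hij hne
    · filter_upwards [nhdsWithin_le_nhds (eventually_lt_nhds (dist_pos.2 hij))] with Δ hΔ _
      exact hΔ.le
  exact hev.exists

theorem exists_pos_wardSeparates {ι : Type*} [DecidableEq ι] [Fintype ι] {P : ℕ}
    (t : ι → Fin P → ℝ) :
    ∃ ε > 0, ∀ x : ι → Fin P → ℝ, (∀ i, dist (x i) (t i) ≤ ε) → WardSeparates x t := by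
  obtain ⟨Δ, hΔ, hsep⟩ := exists_pos_forall_ne_le_dist t
  have hev : ∀ᶠ ε in 𝓝[>] (0 : ℝ), ε ∈ Set.Ioi 0 ∧ 2 * ε < Δ ∧
      Fintype.card ι * (P * (2 * ε) ^ 2) < (Δ - 2 * ε) ^ 2 / 2 := by
    refine eventually_mem_nhdsWithin.and (nhdsWithin_le_nhds ?_)
    refine (ContinuousAt.eventually_lt (by fun_prop) continuousAt_const (by simpa using hΔ)).and
      (ContinuousAt.eventually_lt (by fun_prop) (by fun_prop) ?_)
    norm_num
    positivity
  obtain ⟨ε, hε, hεΔ, hsmall⟩ := hev.exists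
  exact ⟨ε, hε, fun x hx => wardSeparates_of_dist_le hsep hεΔ hsmall hx⟩

section TranslationInvariance

variable {ι : Type*} {P : ℕ}

lemma clMean_sub_const (x : ι → Fin P → ℝ) {A : Finset ι} (hA : A.Nonempty) (c : Fin P → ℝ) :
    clMean (fun i => x i - c) A = clMean x A - c := by
  have hcard : (A.card : ℝ) ≠ 0 := by exact_mod_cast hA.card_pos.ne'
  rw [clMean, clMean, sum_sub_distrib, sum_const, smul_sub, ← Nat.cast_smul_eq_nsmul ℝ,
    smul_smul, inv_mul_cancel₀ hcard, one_smul]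

lemma wardDist_sub_const (x : ι → Fin P → ℝ) (c : Fin P → ℝ) (A B : Finset ι) :
    wardDist (fun i => x i - c) A B = wardDist x A B := by
  rcases A.eq_empty_or_nonempty with rfl | hA
  · simp [wardDist]
  rcases B.eq_empty_or_nonempty with rfl | hB
  · simp [wardDist]
  simp only [wardDist, sqDist, clMean_sub_const x hA, clMean_sub_const x hB, Pi.sub_apply,
    sub_sub_sub_cancel_right]

lemma IsWardPath.sub_const [DecidableEq ι] [Fintype ι] {x : ι → Fin P → ℝ}
    {path : ℕ → Finset (Finset ι)} (hpath : IsWardPath x path) (c : Fin P → ℝ) :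
    IsWardPath (fun i => x i - c) path :=
  ⟨hpath.1, fun K hK1 hKN => by
    simpa only [WardStep, wardDist_sub_const] using hpath.2 K hK1 hKN⟩

end TranslationInvariance

theorem corollary2_family_structure_recovered_general
    {J P : ℕ} {Ω : ℕ → Type*} [∀ n, MeasurableSpace (Ω n)]
    (M : IVModel J P Ω) (hprob : ∀ n, IsProbabilityMeasure (M.μ n))
    (Q : Matrix (Fin J) (Fin J) ℝ)
    (h1 : Assumption1 Q) (h2a : M.Assumption2a)
    (h4 : M.Assumption4 Q)
    (path : ∀ n, Ω n → ℕ → Finset (Finset (Combo J P)))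
    (hpath : ∀ n ω, IsWardPath (fun S => M.βhat S n ω) (path n ω))
    (Qfam : ℕ) (hQfam : Qfam = (Finset.univ.image M.incons).card) :
    Tendsto
      (fun n => M.μ n {ω |
        (∀ C ∈ path n ω Qfam,
          ∃ q ∈ Finset.univ.image M.incons, C = M.family q) ∧
        (∀ q ∈ Finset.univ.image M.incons,
          ∃! C, C ∈ path n ω Qfam ∧ C = M.family q)})
      atTop (nhds 1) := by
  obtain ⟨ε, hε, hsep⟩ := exists_pos_wardSeparates M.incons
  have hcons : TendstoInProb M.μ (fun n ω S => M.βhat S n ω) (fun S => M.β + M.incons S) :=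
    tendstoInProb_pi fun S => M.βhat_tendstoInProb h1 h2a h4 S
  refine tendsto_measure_one_of_subset hprob (hcons.tendsto_measure_dist_le hprob hε)
    fun n ω hω => ?_
  have hclose : ∀ S, dist (M.βhat S n ω - M.β) (M.incons S) ≤ ε := fun S => by
    rw [dist_sub_eq_dist_add_left, add_comm]
    exact (dist_pi_le_iff hε.le).mp hω S
  have hfamilies : path n ω Qfam = (univ.image M.incons).image M.family := by
    rw [hQfam]
    exact ((hpath n ω).sub_const M.β).eq_image_fibers (hsep _ hclose)
  rw [Set.mem_ofPred_eq, hfamilies]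
  refine ⟨fun C hC => ?_, fun q hq => ⟨M.family q, ⟨mem_image_of_mem _ hq, rfl⟩, fun C hC => hC.2⟩⟩
  obtain ⟨q, hq, rfl⟩ := mem_image.mp hC
  exact ⟨q, hq, rfl⟩

/-- **Corollary 2: the family structure is recovered at `K = Q_fam`.**  Under
Assumptions 1, 2a, 3, 4, 5 and family plurality, when Ward's algorithm has produced
exactly `Q_fam` clusters, with probability tending to one every cluster equals some
family `F_q` and every family arises from exactly one cluster. -/
theorem corollary2_family_structure_recovered
    {J P : ℕ} (hPJ : P < J) {Ω : ℕ → Type*} [∀ n, MeasurableSpace (Ω n)]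
    (M : IVModel J P Ω) (hprob : ∀ n, IsProbabilityMeasure (M.μ n))
    (Q : Matrix (Fin J) (Fin J) ℝ) (Sigw : Matrix (Unit ⊕ Fin P) (Unit ⊕ Fin P) ℝ)
    (h1 : Assumption1 Q) (h2a : M.Assumption2a)
    (h3 : M.Assumption3 Sigw) (h4 : M.Assumption4 Q) (h5 : M.Assumption5 Q Sigw)
    (h6a : M.FamilyPlurality)
    (path : ∀ n, Ω n → ℕ → Finset (Finset (Combo J P)))
    (hpath : ∀ n ω, IsWardPath (fun S => M.βhat S n ω) (path n ω))
    (Qfam : ℕ) (hQfam : Qfam = (Finset.univ.image M.incons).card) :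
    Tendsto
      (fun n => M.μ n {ω |
        (∀ C ∈ path n ω Qfam,
          ∃ q ∈ Finset.univ.image M.incons, C = M.family q) ∧
        (∀ q ∈ Finset.univ.image M.incons,
          ∃! C, C ∈ path n ω Qfam ∧ C = M.family q)})
      atTop (nhds 1) :=
  corollary2_family_structure_recovered_general M hprob Q h1 h2a h4 path hpath Qfam hQfam
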